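/- Family-based validity implies product-based validity: let F be an FTS, and suppose environments ζ (state-family) and η (state-product) satisfy fp(ζ(X)) ⊆ η(X) for all X, where fp({(sᵢ,Pᵢ)}) = {(sᵢ,p) | p ∈ Pᵢ}. Then for every negation-free μL'f formula φ', state s, and product family P ⊆ 𝒫: if (s,P) ∈ ⟦φ'⟧'_F(ζ) then (s,p) ∈ ⟦fm(φ')⟧_F(η) for every p ∈ P. -/

import Mathlib

namespace SPLmu

/-- A feature transition system: `theta s a t` is the feature expression
(identified with the set of products satisfying it) guarding the transition. -/
structure FTS (S A P : Type) where
  theta : S → A → S → Set P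
  init : S

/-- A labeled transition system. -/
structure LTS (S A : Type) where
  trans : S → A → S → Prop
  init : S

/-- Projection of an FTS onto a product. -/
def FTS.proj {S A P : Type} (F : FTS S A P) (p : P) : LTS S A :=
  ⟨fun s a t => p ∈ F.theta s a t, F.init⟩

/-- Knaster–Tarski least (pre)fixpoint. -/
def slfp {α : Type} (f : Set α → Set α) : Set α := ⋂₀ {V | f V ⊆ V}

/-- Knaster–Tarski greatest (post)fixpoint. -/
def sgfp {α : Type} (f : Set α → Set α) : Set α := ⋃₀ {V | V ⊆ f V}

/-- The modal mu-calculus μL. -/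
inductive MuL (A X : Type) : Type where
  | bot | top
  | neg : MuL A X → MuL A X
  | or  : MuL A X → MuL A X → MuL A X
  | and : MuL A X → MuL A X → MuL A X
  | dia : A → MuL A X → MuL A X
  | box : A → MuL A X → MuL A X
  | var : X → MuL A X
  | mu  : X → MuL A X → MuL A X
  | nu  : X → MuL A X → MuL A X

/-- The feature mu-calculus μLf (also used as the syntax of μL'f, whose
modality ⟪a|χ⟫ corresponds to `dia`; the translation `fm` is then the identity). -/
inductive MuLf (A X P : Type) : Type where
  | bot | top
  | neg : MuLf A X P → MuLf A X P
  | or  : MuLf A X P → MuLf A X P → MuLf A X P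
  | and : MuLf A X P → MuLf A X P → MuLf A X P
  | dia : A → Set P → MuLf A X P → MuLf A X P
  | box : A → Set P → MuLf A X P → MuLf A X P
  | var : X → MuLf A X P
  | mu  : X → MuLf A X P → MuLf A X P
  | nu  : X → MuLf A X P → MuLf A X P

variable {S A X P : Type}

/-- Standard μL semantics over an LTS. -/
def MuL.sem [DecidableEq X] (L : LTS S A) : MuL A X → (X → Set S) → Set S
  | .bot, _ => ∅
  | .top, _ => Set.univ
  | .neg φ, ε => (MuL.sem L φ ε)ᶜ
  | .or φ ψ, ε => MuL.sem L φ ε ∪ MuL.sem L ψ ε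
  | .and φ ψ, ε => MuL.sem L φ ε ∩ MuL.sem L ψ ε
  | .dia a φ, ε => {s | ∃ t, L.trans s a t ∧ t ∈ MuL.sem L φ ε}
  | .box a φ, ε => {s | ∀ t, L.trans s a t → t ∈ MuL.sem L φ ε}
  | .var x, ε => ε x
  | .mu x φ, ε => slfp (fun V => MuL.sem L φ (Function.update ε x V))
  | .nu x φ, ε => sgfp (fun V => MuL.sem L φ (Function.update ε x V))

/-- Product-based μLf semantics over an FTS (sets of state-product pairs). -/
def MuLf.sem [DecidableEq X] (F : FTS S A P) : MuLf A X P → (X → Set (S × P)) → Set (S × P)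
  | .bot, _ => ∅
  | .top, _ => Set.univ
  | .neg φ, η => (MuLf.sem F φ η)ᶜ
  | .or φ ψ, η => MuLf.sem F φ η ∪ MuLf.sem F ψ η
  | .and φ ψ, η => MuLf.sem F φ η ∩ MuLf.sem F ψ η
  | .dia a χ φ, η =>
      {sp | sp.2 ∈ χ ∧ ∃ t, sp.2 ∈ F.theta sp.1 a t ∧ (t, sp.2) ∈ MuLf.sem F φ η}
  | .box a χ φ, η =>
      {sp | sp.2 ∈ χ → ∀ t, sp.2 ∈ F.theta sp.1 a t → (t, sp.2) ∈ MuLf.sem F φ η}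
  | .var x, η => η x
  | .mu x φ, η => slfp (fun V => MuLf.sem F φ (Function.update η x V))
  | .nu x φ, η => sgfp (fun V => MuLf.sem F φ (Function.update η x V))

/-- Family-based μL'f semantics over an FTS (sets of state-family pairs);
here `dia` plays the role of the family modality ⟪a|χ⟫. -/
def MuLf.fsem [DecidableEq X] (F : FTS S A P) :
    MuLf A X P → (X → Set (S × Set P)) → Set (S × Set P)
  | .bot, _ => ∅
  | .top, _ => Set.univ
  | .neg φ, ζ => (MuLf.fsem F φ ζ)ᶜ
  | .or φ ψ, ζ => MuLf.fsem F φ ζ ∪ MuLf.fsem F ψ ζ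
  | .and φ ψ, ζ => MuLf.fsem F φ ζ ∩ MuLf.fsem F ψ ζ
  | .dia a χ φ, ζ =>
      {sP | sP.2 ⊆ χ ∧ ∃ t, sP.2 ⊆ F.theta sP.1 a t ∧
        (t, sP.2 ∩ χ ∩ F.theta sP.1 a t) ∈ MuLf.fsem F φ ζ}
  | .box a χ φ, ζ =>
      {sP | (sP.2 ∩ χ).Nonempty → ∀ t, (sP.2 ∩ χ ∩ F.theta sP.1 a t).Nonempty →
        (t, sP.2 ∩ χ ∩ F.theta sP.1 a t) ∈ MuLf.fsem F φ ζ}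
  | .var x, ζ => ζ x
  | .mu x φ, ζ => slfp (fun W => MuLf.fsem F φ (Function.update ζ x W))
  | .nu x φ, ζ => sgfp (fun W => MuLf.fsem F φ (Function.update ζ x W))

-- The translation sm : μLf × 𝒫 → μL.
open Classical in
noncomputable def MuLf.sm : MuLf A X P → P → MuL A X
  | .bot, _ => .bot
  | .top, _ => .top
  | .neg φ, p => .neg (MuLf.sm φ p)
  | .or φ ψ, p => .or (MuLf.sm φ p) (MuLf.sm ψ p)
  | .and φ ψ, p => .and (MuLf.sm φ p) (MuLf.sm ψ p)
  | .dia a χ φ, p => if p ∈ χ then .dia a (MuLf.sm φ p) else .bot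
  | .box a χ φ, p => if p ∈ χ then .box a (MuLf.sm φ p) else .top
  | .var x, _ => .var x
  | .mu x φ, p => .mu x (MuLf.sm φ p)
  | .nu x φ, p => .nu x (MuLf.sm φ p)

/-- Free variables of a μLf formula. -/
def MuLf.fv : MuLf A X P → Set X
  | .bot => ∅
  | .top => ∅
  | .neg φ => MuLf.fv φ
  | .or φ ψ => MuLf.fv φ ∪ MuLf.fv ψ
  | .and φ ψ => MuLf.fv φ ∪ MuLf.fv ψ
  | .dia _ _ φ => MuLf.fv φ
  | .box _ _ φ => MuLf.fv φ
  | .var x => {x}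
  | .mu x φ => MuLf.fv φ \ {x}
  | .nu x φ => MuLf.fv φ \ {x}

/-- A μLf formula is closed if it has no free variables. -/
def MuLf.closed (φ : MuLf A X P) : Prop := MuLf.fv φ = ∅

/-- Negation-free μLf formulas. -/
def MuLf.negFree : MuLf A X P → Prop
  | .bot => True
  | .top => True
  | .neg _ => False
  | .or φ ψ => MuLf.negFree φ ∧ MuLf.negFree ψ
  | .and φ ψ => MuLf.negFree φ ∧ MuLf.negFree ψ
  | .dia _ _ φ => MuLf.negFree φ
  | .box _ _ φ => MuLf.negFree φ
  | .var _ => True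
  | .mu _ φ => MuLf.negFree φ
  | .nu _ φ => MuLf.negFree φ

/-- Diamond-free μLf formulas (no ⟨a|χ⟩ / ⟪a|χ⟫). -/
def MuLf.diaFree : MuLf A X P → Prop
  | .bot => True
  | .top => True
  | .neg φ => MuLf.diaFree φ
  | .or φ ψ => MuLf.diaFree φ ∧ MuLf.diaFree ψ
  | .and φ ψ => MuLf.diaFree φ ∧ MuLf.diaFree ψ
  | .dia _ _ _ => False
  | .box _ _ φ => MuLf.diaFree φ
  | .var _ => True
  | .mu _ φ => MuLf.diaFree φ
  | .nu _ φ => MuLf.diaFree φ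

mutual
/-- All free occurrences of `x` are under an even number of negations. -/
def MuLf.posIn (x : X) : MuLf A X P → Prop
  | .bot => True
  | .top => True
  | .neg φ => MuLf.negOcc x φ
  | .or φ ψ => MuLf.posIn x φ ∧ MuLf.posIn x ψ
  | .and φ ψ => MuLf.posIn x φ ∧ MuLf.posIn x ψ
  | .dia _ _ φ => MuLf.posIn x φ
  | .box _ _ φ => MuLf.posIn x φ
  | .var _ => True
  | .mu y φ => y = x ∨ MuLf.posIn x φ
  | .nu y φ => y = x ∨ MuLf.posIn x φ

/-- All free occurrences of `x` are under an odd number of negations. -/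
def MuLf.negOcc (x : X) : MuLf A X P → Prop
  | .bot => True
  | .top => True
  | .neg φ => MuLf.posIn x φ
  | .or φ ψ => MuLf.negOcc x φ ∧ MuLf.negOcc x ψ
  | .and φ ψ => MuLf.negOcc x φ ∧ MuLf.negOcc x ψ
  | .dia _ _ φ => MuLf.negOcc x φ
  | .box _ _ φ => MuLf.negOcc x φ
  | .var y => y ≠ x
  | .mu y φ => y = x ∨ MuLf.negOcc x φ
  | .nu y φ => y = x ∨ MuLf.negOcc x φ
end

/-- Well-formedness: fixpoint-bound variables occur positively. -/
def MuLf.wf : MuLf A X P → Prop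
  | .bot => True
  | .top => True
  | .neg φ => MuLf.wf φ
  | .or φ ψ => MuLf.wf φ ∧ MuLf.wf ψ
  | .and φ ψ => MuLf.wf φ ∧ MuLf.wf ψ
  | .dia _ _ φ => MuLf.wf φ
  | .box _ _ φ => MuLf.wf φ
  | .var _ => True
  | .mu x φ => MuLf.posIn x φ ∧ MuLf.wf φ
  | .nu x φ => MuLf.posIn x φ ∧ MuLf.wf φ

/-- Substitution φ[¬X/X] of ¬X for the free occurrences of X. -/
def MuLf.substNegVar [DecidableEq X] (x : X) : MuLf A X P → MuLf A X P
  | .bot => .bot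
  | .top => .top
  | .neg φ => .neg (MuLf.substNegVar x φ)
  | .or φ ψ => .or (MuLf.substNegVar x φ) (MuLf.substNegVar x ψ)
  | .and φ ψ => .and (MuLf.substNegVar x φ) (MuLf.substNegVar x ψ)
  | .dia a χ φ => .dia a χ (MuLf.substNegVar x φ)
  | .box a χ φ => .box a χ (MuLf.substNegVar x φ)
  | .var y => if y = x then .neg (.var y) else .var y
  | .mu y φ => if y = x then .mu y φ else .mu y (MuLf.substNegVar x φ)
  | .nu y φ => if y = x then .nu y φ else .nu y (MuLf.substNegVar x φ)

/-- Projection from state-family sets to state-product sets. -/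
def fp {S P : Type} (W : Set (S × Set P)) : Set (S × P) :=
  {sp | ∃ Pf : Set P, (sp.1, Pf) ∈ W ∧ sp.2 ∈ Pf}

/-!
`fp` is the lower adjoint of `fpCore`, which sends a set of state-product pairs to the
state-family pairs all of whose products it contains. An inclusion `fp W ⊆ V` is preserved by
every negation-free connective: in both modalities a product `p ∈ P` still lies in the
restricted family `P ∩ χ ∩ θ(s, a, t)`. Fixpoints transfer along the adjunction: the core of a
product prefixpoint is a family prefixpoint, and the projection of a family postfixpoint is a
product postfixpoint; neither transfer needs the semantic functions to be monotone.
-/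

section Transfer

variable {α β : Type} {l : Set α → Set β} {u : Set β → Set α}

theorem _root_.GaloisConnection.l_slfp_subset (gc : GaloisConnection l u)
    {f : Set α → Set α} {g : Set β → Set β} (hfg : ∀ W V, l W ⊆ V → l (f W) ⊆ g V) :
    l (slfp f) ⊆ slfp g := by
  refine Set.subset_sInter fun V hV => gc.l_le (Set.sInter_subset_of_mem ?_)
  exact gc.le_u ((hfg _ _ (gc.l_u_le V)).trans hV)

theorem _root_.GaloisConnection.l_sgfp_subset (gc : GaloisConnection l u)
    {f : Set α → Set α} {g : Set β → Set β} (hfg : ∀ W V, l W ⊆ V → l (f W) ⊆ g V) :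
    l (sgfp f) ⊆ sgfp g := by
  refine gc.l_le (Set.sUnion_subset fun W hW => gc.le_u (Set.subset_sUnion_of_mem ?_))
  exact (gc.monotone_l hW).trans (hfg W _ subset_rfl)

end Transfer

def fpCore {S P : Type} (V : Set (S × P)) : Set (S × Set P) :=
  {sP | ∀ p ∈ sP.2, (sP.1, p) ∈ V}

theorem gc_fp_fpCore {S P : Type} : GaloisConnection (@fp S P) fpCore :=
  fun _ _ => ⟨fun h _ hW _ hp => h ⟨_, hW, hp⟩, fun h _ ⟨_, hW, hp⟩ => h hW _ hp⟩

theorem fp_update_subset [DecidableEq X] {ζ : X → Set (S × Set P)} {η : X → Set (S × P)}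
    (h : ∀ y, fp (ζ y) ⊆ η y) (x : X) {W : Set (S × Set P)} {V : Set (S × P)}
    (hWV : fp W ⊆ V) (y : X) :
    fp (Function.update ζ x W y) ⊆ Function.update η x V y := by
  rcases eq_or_ne y x with rfl | hy
  · simpa only [Function.update_self] using hWV
  · simpa only [Function.update_of_ne hy] using h y

theorem fp_fsem_subset_sem [DecidableEq X] (F : FTS S A P) {φ : MuLf A X P}
    (hφ : φ.negFree) {ζ : X → Set (S × Set P)} {η : X → Set (S × P)}
    (h : ∀ x, fp (ζ x) ⊆ η x) : fp (φ.fsem F ζ) ⊆ φ.sem F η := by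
  induction φ generalizing ζ η with
  | bot => exact fun _ ⟨_, hmem, _⟩ => hmem.elim
  | top => exact fun _ _ => trivial
  | neg => exact hφ.elim
  | or φ ψ ihφ ihψ =>
      exact gc_fp_fpCore.l_sup.trans_le (Set.union_subset_union (ihφ hφ.1 h) (ihψ hφ.2 h))
  | and φ ψ ihφ ihψ =>
      exact (gc_fp_fpCore.monotone_l.map_inf_le _ _).trans
        (Set.inter_subset_inter (ihφ hφ.1 h) (ihψ hφ.2 h))
  | dia a χ φ ih =>
      rintro ⟨s, p⟩ ⟨Pf, ⟨hχ, t, hθ, ht⟩, hp⟩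
      exact ⟨hχ hp, t, hθ hp, ih hφ h ⟨_, ht, ⟨hp, hχ hp⟩, hθ hp⟩⟩
  | box a χ φ ih =>
      rintro ⟨s, p⟩ ⟨Pf, hbox, hp⟩ hpχ t hpθ
      exact ih hφ h ⟨_, hbox ⟨p, hp, hpχ⟩ t ⟨p, ⟨hp, hpχ⟩, hpθ⟩, ⟨hp, hpχ⟩, hpθ⟩
  | var x => exact h x
  | mu x φ ih =>
      exact gc_fp_fpCore.l_slfp_subset fun _ _ hWV => ih hφ (fp_update_subset h x hWV)
  | nu x φ ih =>
      exact gc_fp_fpCore.l_sgfp_subset fun _ _ hWV => ih hφ (fp_update_subset h x hWV)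

/-- family-based validity implies product-based validity for
negation-free μL'f formulas (fm is the identity on our shared syntax). -/
theorem stmt6 {S A X P : Type} [DecidableEq X] (F : FTS S A P)
    (zeta : X → Set (S × Set P)) (eta : X → Set (S × P))
    (hrel : ∀ x : X, fp (zeta x) ⊆ eta x)
    (phi : MuLf A X P) (hnf : MuLf.negFree phi) (s : S) (Pf : Set P) :
    (s, Pf) ∈ MuLf.fsem F phi zeta → ∀ p ∈ Pf, (s, p) ∈ MuLf.sem F phi eta :=
  fun h _ hp => fp_fsem_subset_sem F hnf hrel ⟨Pf, h, hp⟩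

end SPLmu
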